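/- In the same dynamics (g(w,p) = p^T A w - ½‖w‖_2², α_t = t, w-player OFTL, p-player FTRL⁺ with entropy regularizer, step size 1/4, initialized at the uniform distribution), the weighted regret of the p-player satisfies R^p ≤ 4 log n - 2 Σ_{t=1}^T ‖p_t - p_{t-1}‖_1². -/

import Mathlib

open Real Finset


lemma sp_k_deriv {x : ℝ} (hx : 0 < x) :
    HasDerivAt (fun x : ℝ => (x+1) * Real.log x - 2*(x-1)) (Real.log x + (x+1)*x⁻¹ - 2) x := by
  have h1 : HasDerivAt (fun x : ℝ => (x+1) * Real.log x) (1 * Real.log x + (x+1)*x⁻¹) x :=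
    ((hasDerivAt_id x).add_const 1).mul (Real.hasDerivAt_log hx.ne')
  have h2 : HasDerivAt (fun x : ℝ => 2*(x-1)) 2 x := by
    simpa using ((hasDerivAt_id x).sub_const 1).const_mul 2
  simpa [one_mul, sub_eq_add_neg, add_assoc] using h1.fun_sub h2

lemma sp_k_mono : MonotoneOn (fun x : ℝ => (x+1) * Real.log x - 2*(x-1)) (Set.Ioi 0) := by
  apply monotoneOn_of_deriv_nonneg (convex_Ioi 0)
  · exact fun x hx => ((sp_k_deriv hx).continuousAt.continuousWithinAt)
  · intro x hx
    rw [interior_Ioi] at hx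
    exact (sp_k_deriv hx).differentiableAt.differentiableWithinAt
  · intro x hx
    rw [interior_Ioi] at hx
    rw [(sp_k_deriv hx).deriv]
    have h := Real.one_sub_inv_le_log_of_pos hx
    have : (x+1)*x⁻¹ = 1 + x⁻¹ := by
      rw [add_mul, mul_inv_cancel₀ hx.ne', one_mul]
    rw [this]; linarith

lemma sp_k_sign {x : ℝ} (hx : 0 < x) :
    (x ≤ 1 → (x+1) * Real.log x - 2*(x-1) ≤ 0) ∧
    (1 ≤ x → 0 ≤ (x+1) * Real.log x - 2*(x-1)) := by
  have h1 : ((1:ℝ)+1) * Real.log 1 - 2*(1-1) = 0 := by simp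
  constructor
  · intro h
    have := sp_k_mono hx (by norm_num : (1:ℝ) ∈ Set.Ioi 0) h
    simpa [h1] using this
  · intro h
    have := sp_k_mono (by norm_num : (1:ℝ) ∈ Set.Ioi 0) hx h
    simpa [h1] using this

lemma sp_h_deriv {x : ℝ} (hx : 0 < x) :
    HasDerivAt (fun x : ℝ => (x + 2) * (x * Real.log x - x + 1) - (3/2)*(x-1)^2)
      (2 * ((x+1) * Real.log x - 2*(x-1))) x := by
  have hlog : HasDerivAt (fun x : ℝ => x * Real.log x) (1 * Real.log x + x * x⁻¹) x :=
    (hasDerivAt_id x).mul (Real.hasDerivAt_log hx.ne')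
  have h1 : HasDerivAt (fun x : ℝ => x * Real.log x - x + 1)
      (1 * Real.log x + x * x⁻¹ - 1) x := by
    simpa using (hlog.sub (hasDerivAt_id x)).add_const 1
  have h2 : HasDerivAt (fun x : ℝ => (x + 2) * (x * Real.log x - x + 1))
      (1 * (x * Real.log x - x + 1) + (x+2) * (1 * Real.log x + x * x⁻¹ - 1)) x :=
    ((hasDerivAt_id x).add_const 2).mul h1
  have h3 : HasDerivAt (fun x : ℝ => (3/2)*(x-1)^2) ((3/2)*(2*(x-1))) x := by
    simpa using (((hasDerivAt_id x).sub_const 1).pow 2).const_mul (3/2:ℝ)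
  have hxx : x * x⁻¹ = 1 := mul_inv_cancel₀ hx.ne'
  have := h2.fun_sub h3
  refine this.congr_deriv ?_
  rw [hxx]; ring

lemma sp_key (x : ℝ) (hx : 0 < x) :
    (3/2) * (x - 1)^2 ≤ (x + 2) * (x * Real.log x - x + 1) := by
  set h : ℝ → ℝ := fun x => (x + 2) * (x * Real.log x - x + 1) - (3/2)*(x-1)^2 with hh
  have h1 : h 1 = 0 := by simp [hh]
  have key : 0 ≤ h x := by
    rcases le_total x 1 with hx1 | hx1
    · have hanti : AntitoneOn h (Set.Ioc 0 1) := by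
        apply antitoneOn_of_deriv_nonpos (convex_Ioc 0 1)
        · exact fun y hy => ((sp_h_deriv hy.1).continuousAt.continuousWithinAt)
        · intro y hy
          rw [interior_Ioc] at hy
          exact (sp_h_deriv hy.1).differentiableAt.differentiableWithinAt
        · intro y hy
          rw [interior_Ioc] at hy
          rw [(sp_h_deriv hy.1).deriv]
          have := (sp_k_sign hy.1).1 hy.2.le
          linarith
      have := hanti ⟨hx, hx1⟩ ⟨by norm_num, le_refl 1⟩ hx1
      rw [h1] at this; exact this
    · have hmono : MonotoneOn h (Set.Ici 1) := by
        apply monotoneOn_of_deriv_nonneg (convex_Ici 1)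
        · exact fun y hy => ((sp_h_deriv (lt_of_lt_of_le one_pos hy)).continuousAt.continuousWithinAt)
        · intro y hy
          rw [interior_Ici] at hy
          exact (sp_h_deriv (lt_trans one_pos hy)).differentiableAt.differentiableWithinAt
        · intro y hy
          rw [interior_Ici] at hy
          rw [(sp_h_deriv (lt_trans one_pos hy)).deriv]
          have := (sp_k_sign (lt_trans one_pos hy)).2 hy.le
          linarith
      have := hmono (by norm_num : (1:ℝ) ∈ Set.Ici 1) hx1 hx1
      rw [h1] at this; exact this
  simp only [hh] at key
  linarith
lemma sp_key' (a b : ℝ) (ha : 0 ≤ a) (hb : 0 ≤ b) (h : b = 0 → a = 0) :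
    (3/2) * (a - b)^2 ≤ (a + 2*b) * (a * Real.log (a/b) - a + b) := by
  rcases eq_or_lt_of_le hb with hb0 | hb0
  · rw [← hb0]; rw [h hb0.symm]; norm_num
  rcases eq_or_lt_of_le ha with ha0 | ha0
  · rw [← ha0]; simp; nlinarith
  have hx : 0 < a / b := div_pos ha0 hb0
  have := sp_key (a/b) hx
  have hb' : b ≠ 0 := hb0.ne'
  have e1 : a + 2*b = b * (a/b + 2) := by field_simp
  have e2 : a * Real.log (a/b) - a + b = b * ((a/b) * Real.log (a/b) - a/b + 1) := by
    field_simp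
  have e3 : (a - b)^2 = b^2 * (a/b - 1)^2 := by field_simp
  rw [e1, e2, e3]
  calc (3/2) * (b^2 * (a/b - 1)^2) = b^2 * ((3/2) * (a/b-1)^2) := by ring
    _ ≤ b^2 * ((a/b + 2) * ((a/b) * Real.log (a/b) - a/b + 1)) := by
        apply mul_le_mul_of_nonneg_left this (sq_nonneg b)
    _ = b * (a/b + 2) * (b * ((a/b) * Real.log (a/b) - a/b + 1)) := by ring

lemma sp_phi_nonneg (a b : ℝ) (ha : 0 ≤ a) (hb : 0 ≤ b) (h : b = 0 → a = 0) :
    0 ≤ a * Real.log (a/b) - a + b := by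
  rcases eq_or_lt_of_le hb with hb0 | hb0
  · rw [← hb0, h hb0.symm]; norm_num
  rcases eq_or_lt_of_le ha with ha0 | ha0
  · rw [← ha0]; simp [hb]
  have key := sp_key' a b ha hb h
  nlinarith [sq_nonneg (a-b)]

lemma sp_pinsker {n : ℕ} (p m : Fin n → ℝ) (hp : ∀ i, 0 ≤ p i) (hm : ∀ i, 0 ≤ m i)
    (hps : ∑ i, p i = 1) (hms : ∑ i, m i = 1) (h0 : ∀ i, m i = 0 → p i = 0) :
    (1/2) * (∑ i, |p i - m i|)^2 ≤ ∑ i, p i * Real.log (p i / m i) := by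
  set φ : Fin n → ℝ := fun i => p i * Real.log (p i / m i) - p i + m i with hφ
  have hφn : ∀ i, 0 ≤ φ i := fun i => sp_phi_nonneg _ _ (hp i) (hm i) (h0 i)
  have hsum : ∑ i, φ i = ∑ i, p i * Real.log (p i / m i) := by
    simp [hφ, Finset.sum_add_distrib, Finset.sum_sub_distrib, hps, hms]
  -- Cauchy-Schwarz: |p-m| ≤ sqrt((2/3)(p+2m)) * sqrt(φ)
  have hcs : (∑ i, |p i - m i|)^2 ≤ (∑ i, ((2/3) * (p i + 2 * m i))) * (∑ i, φ i) := by
    have step : ∀ i : Fin n, |p i - m i| ≤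
        Real.sqrt ((2/3) * (p i + 2 * m i)) * Real.sqrt (φ i) := by
      intro i
      have hkey := sp_key' (p i) (m i) (hp i) (hm i) (h0 i)
      have hsq : (p i - m i)^2 ≤ ((2/3) * (p i + 2 * m i)) * φ i := by
        simp only [hφ]; nlinarith
      calc |p i - m i| = Real.sqrt ((p i - m i)^2) := (Real.sqrt_sq_eq_abs _).symm
        _ ≤ Real.sqrt (((2/3) * (p i + 2 * m i)) * φ i) := Real.sqrt_le_sqrt hsq
        _ = Real.sqrt ((2/3) * (p i + 2 * m i)) * Real.sqrt (φ i) :=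
            Real.sqrt_mul (by nlinarith [hp i, hm i]) _
    calc (∑ i, |p i - m i|)^2
        ≤ (∑ i, Real.sqrt ((2/3) * (p i + 2 * m i)) * Real.sqrt (φ i))^2 := by
          apply pow_le_pow_left₀ (Finset.sum_nonneg fun i _ => abs_nonneg _)
          exact Finset.sum_le_sum fun i _ => step i
      _ ≤ (∑ i, Real.sqrt ((2/3) * (p i + 2 * m i))^2) * (∑ i, Real.sqrt (φ i)^2) :=
          Finset.sum_mul_sq_le_sq_mul_sq _ _ _
      _ = (∑ i, ((2/3) * (p i + 2 * m i))) * (∑ i, φ i) := by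
          congr 1
          · exact Finset.sum_congr rfl fun i _ => Real.sq_sqrt (by nlinarith [hp i, hm i])
          · exact Finset.sum_congr rfl fun i _ => Real.sq_sqrt (hφn i)
  have hsum2 : ∑ i, ((2/3) * (p i + 2 * m i)) = 2 := by
    rw [← Finset.mul_sum]
    rw [Finset.sum_add_distrib, ← Finset.mul_sum, hps, hms]
    norm_num
  rw [hsum2, hsum] at hcs
  linarith
lemma sp_logsplit {n : ℕ} [NeZero n] (a m : ℝ) (ha : 0 ≤ a) (hm : 0 ≤ m) (h : m = 0 → a = 0) :
    a * Real.log (n * a) = a * Real.log (a/m) + a * Real.log (n * m) := by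
  rcases eq_or_lt_of_le ha with ha0 | ha0
  · rw [← ha0]; ring
  have hm0 : 0 < m := lt_of_le_of_ne hm (fun e => by simp [h e.symm] at ha0)
  have hn : (0:ℝ) < n := Nat.cast_pos.mpr (Nat.pos_of_ne_zero (NeZero.ne n))
  have : (n:ℝ) * a = (a/m) * (n * m) := by field_simp
  rw [this, Real.log_mul (by positivity) (by positivity)]
  ring

lemma sp_strong_convex {n : ℕ} [NeZero n] (p q : Fin n → ℝ)
    (hp : p ∈ stdSimplex ℝ (Fin n)) (hq : q ∈ stdSimplex ℝ (Fin n))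
    {l : ℝ} (hl0 : 0 < l) (hl1 : l < 1) :
    (l*(1-l)/2) * (∑ i, |p i - q i|)^2
      + (∑ i, ((1-l)*p i + l*q i) * Real.log (n * ((1-l)*p i + l*q i)))
    ≤ (1-l) * (∑ i, p i * Real.log (n * p i)) + l * (∑ i, q i * Real.log (n * q i)) := by
  set m : Fin n → ℝ := fun i => (1-l)*p i + l*q i with hm
  have hmn : ∀ i, 0 ≤ m i := fun i => by
    have := hp.1 i; have := hq.1 i; simp only [hm]; nlinarith
  have hms : ∑ i, m i = 1 := by
    simp only [hm, Finset.sum_add_distrib, ← Finset.mul_sum, hp.2, hq.2]; ring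
  have h0p : ∀ i, m i = 0 → p i = 0 := fun i hi => by
    have h1 := hp.1 i; have h2 := hq.1 i
    simp only [hm] at hi; nlinarith
  have h0q : ∀ i, m i = 0 → q i = 0 := fun i hi => by
    have h1 := hp.1 i; have h2 := hq.1 i
    simp only [hm] at hi; nlinarith
  have hiden : (1-l) * (∑ i, p i * Real.log (n * p i)) + l * (∑ i, q i * Real.log (n * q i))
      = (1-l) * (∑ i, p i * Real.log (p i / m i)) + l * (∑ i, q i * Real.log (q i / m i))
        + ∑ i, m i * Real.log (n * m i) := by
    simp only [Finset.mul_sum, ← Finset.sum_add_distrib]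
    apply Finset.sum_congr rfl
    intro i _
    rw [sp_logsplit (p i) (m i) (hp.1 i) (hmn i) (h0p i),
        sp_logsplit (q i) (m i) (hq.1 i) (hmn i) (h0q i)]
    simp only [hm]
    ring
  have hpin1 := sp_pinsker p m hp.1 hmn hp.2 hms h0p
  have hpin2 := sp_pinsker q m hq.1 hmn hq.2 hms h0q
  have habs1 : ∑ i, |p i - m i| = l * ∑ i, |p i - q i| := by
    rw [Finset.mul_sum]
    apply Finset.sum_congr rfl
    intro i _
    rw [← abs_of_pos hl0, ← abs_mul]
    congr 1
    simp only [hm]; ring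
  have habs2 : ∑ i, |q i - m i| = (1-l) * ∑ i, |p i - q i| := by
    rw [Finset.mul_sum]
    apply Finset.sum_congr rfl
    intro i _
    rw [← abs_of_pos (by linarith : (0:ℝ) < 1 - l), ← abs_mul, ← abs_neg]
    congr 1
    simp only [hm]; ring
  rw [habs1] at hpin1
  rw [habs2] at hpin2
  have h1 : (1-l) * ((1/2) * (l * ∑ i, |p i - q i|)^2) ≤ (1-l) * ∑ i, p i * Real.log (p i / m i) :=
    mul_le_mul_of_nonneg_left hpin1 (by linarith)
  have h2 : l * ((1/2) * ((1-l) * ∑ i, |p i - q i|)^2) ≤ l * ∑ i, q i * Real.log (q i / m i) :=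
    mul_le_mul_of_nonneg_left hpin2 hl0.le
  have hmeq : (∑ i, m i * Real.log (n * m i))
      = ∑ i, ((1-l)*p i + l*q i) * Real.log (n * ((1-l)*p i + l*q i)) := by
    apply Finset.sum_congr rfl; intro i _; simp only [hm]
  rw [← hmeq]
  nlinarith [sq_nonneg (∑ i, |p i - q i|)]
/-- strong-convexity bound at a minimizer of linear + 4·entropy on the simplex -/
lemma sp_min_bound {n : ℕ} [NeZero n] (c : Fin n → ℝ) (x : Fin n → ℝ)
    (hmin : IsMinOn (fun q : Fin n → ℝ =>
        (∑ i, q i * c i) + 4 * ∑ i, q i * Real.log (n * q i)) (stdSimplex ℝ (Fin n)) x)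
    (hxm : x ∈ stdSimplex ℝ (Fin n)) :
    ∀ q ∈ stdSimplex ℝ (Fin n),
      ((∑ i, x i * c i) + 4 * ∑ i, x i * Real.log (n * x i)) + 2 * (∑ i, |q i - x i|)^2
        ≤ (∑ i, q i * c i) + 4 * ∑ i, q i * Real.log (n * q i) := by
  intro q hq
  set G : (Fin n → ℝ) → ℝ := fun q => (∑ i, q i * c i) + 4 * ∑ i, q i * Real.log (n * q i)
    with hG
  set cc : ℝ := ∑ i, |q i - x i| with hcc
  have key : ∀ l : ℝ, l ∈ Set.Ioo (0:ℝ) 1 → G x + 2 * (1-l) * cc^2 ≤ G q := by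
    intro l hl
    obtain ⟨hl0, hl1⟩ := hl
    set m : Fin n → ℝ := fun i => (1-l)*x i + l*q i with hm
    have hmmem : m ∈ stdSimplex ℝ (Fin n) := by
      constructor
      · intro i; have := hxm.1 i; have := hq.1 i; simp only [hm]; nlinarith
      · simp only [hm, Finset.sum_add_distrib, ← Finset.mul_sum, hxm.2, hq.2]; ring
    have hGm : G x ≤ G m := hmin hmmem
    have hlin : ∑ i, m i * c i = (1-l) * (∑ i, x i * c i) + l * ∑ i, q i * c i := by
      simp only [hm, Finset.mul_sum, ← Finset.sum_add_distrib]
      apply Finset.sum_congr rfl; intro i _; ring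
    have hsc := sp_strong_convex x q hxm hq hl0 hl1
    have habs : ∑ i, |x i - q i| = cc := by
      rw [hcc]; apply Finset.sum_congr rfl; intro i _; rw [abs_sub_comm]
    rw [habs] at hsc
    simp only [hG, hlin] at hGm ⊢
    simp only [hm] at hGm
    nlinarith [hsc, hGm]
  have hlim : Filter.Tendsto (fun l : ℝ => G x + 2 * (1-l) * cc^2) (nhdsWithin 0 (Set.Ioi 0))
      (nhds (G x + 2 * cc^2)) := by
    have hcont : Filter.Tendsto (fun l : ℝ => G x + 2 * (1-l) * cc^2) (nhds 0)
        (nhds (G x + 2 * (1-0) * cc^2)) := by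
      apply Continuous.tendsto
      continuity
    simp only [sub_zero, mul_one] at hcont
    exact hcont.mono_left nhdsWithin_le_nhds
  have hev : ∀ᶠ l in nhdsWithin (0:ℝ) (Set.Ioi 0), G x + 2 * (1-l) * cc^2 ≤ G q := by
    filter_upwards [Ioo_mem_nhdsGT_of_mem (Set.mem_Ico.mpr ⟨le_refl 0, one_pos⟩)] with l hl
    exact key l hl
  have := le_of_tendsto hlim hev
  simp only [hG] at this ⊢
  linarith
lemma sp_R_nonneg {n : ℕ} [NeZero n] (q : Fin n → ℝ) (hq : q ∈ stdSimplex ℝ (Fin n)) :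
    0 ≤ ∑ i, q i * Real.log (n * q i) := by
  have hn : (0:ℝ) < n := Nat.cast_pos.mpr (Nat.pos_of_ne_zero (NeZero.ne n))
  have h := sp_pinsker q (fun _ => (n:ℝ)⁻¹) hq.1 (fun _ => by positivity) hq.2
    (by simp [Finset.card_univ]) (fun i hi => absurd hi (inv_ne_zero hn.ne'))
  have he : ∀ i ∈ Finset.univ, q i * Real.log (q i / (n:ℝ)⁻¹) = q i * Real.log (n * q i) := by
    intro i _
    congr 1
    rw [div_eq_mul_inv, inv_inv, mul_comm]
  rw [Finset.sum_congr rfl he] at h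
  nlinarith [sq_nonneg (∑ i, |q i - (n:ℝ)⁻¹|)]

lemma sp_R_le_log {n : ℕ} [NeZero n] (q : Fin n → ℝ) (hq : q ∈ stdSimplex ℝ (Fin n)) :
    ∑ i, q i * Real.log (n * q i) ≤ Real.log n := by
  have hn : (0:ℝ) < n := Nat.cast_pos.mpr (Nat.pos_of_ne_zero (NeZero.ne n))
  calc ∑ i, q i * Real.log (n * q i) ≤ ∑ i, q i * Real.log n := by
        apply Finset.sum_le_sum
        intro i _
        rcases eq_or_lt_of_le (hq.1 i) with h0 | h0
        · rw [← h0]; simp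
        · apply mul_le_mul_of_nonneg_left _ (hq.1 i)
          apply Real.log_le_log (by positivity)
          have : q i ≤ 1 := by
            rw [← hq.2]
            exact Finset.single_le_sum (fun j _ => hq.1 j) (Finset.mem_univ i)
          nlinarith
    _ = Real.log n := by rw [← Finset.sum_mul, hq.2, one_mul]

theorem smooth_perceptron_p_regret {n d T : ℕ} [NeZero n] (hT : 1 ≤ T)
    (A : Matrix (Fin n) (Fin d) ℝ)
    (w : ℕ → (Fin d → ℝ))
    (p : ℕ → (Fin n → ℝ))
    (hp0 : p 0 = fun _ => (n : ℝ)⁻¹)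
    (hpmem : ∀ t, p t ∈ stdSimplex ℝ (Fin n))
    (hp : ∀ t ∈ Finset.Icc 1 T,
      IsMinOn (fun q : Fin n → ℝ =>
        (1 / 4) * ∑ s ∈ Finset.Icc 1 t, (s : ℝ) * (∑ i, q i * A.mulVec (w s) i)
          + ∑ i, q i * Real.log (n * q i)) (stdSimplex ℝ (Fin n)) (p t)) :
    ∀ q ∈ stdSimplex ℝ (Fin n),
      ∑ t ∈ Finset.Icc 1 T, (t : ℝ) * (∑ i, p t i * A.mulVec (w t) i)
        - ∑ t ∈ Finset.Icc 1 T, (t : ℝ) * (∑ i, q i * A.mulVec (w t) i) ≤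
        4 * Real.log n - 2 * ∑ t ∈ Finset.Icc 1 T, (∑ i, |p t i - p (t - 1) i|) ^ 2 := by
  intro q hq
  have hn : (0:ℝ) < n := Nat.cast_pos.mpr (Nat.pos_of_ne_zero (NeZero.ne n))
  set R : (Fin n → ℝ) → ℝ := fun q => ∑ i, q i * Real.log (n * q i) with hR
  set c : ℕ → Fin n → ℝ := fun t i => ∑ s ∈ Finset.Icc 1 t, (s:ℝ) * A.mulVec (w s) i with hc
  -- swap sums
  have hswap : ∀ (t : ℕ) (x : Fin n → ℝ),
      ∑ s ∈ Finset.Icc 1 t, (s:ℝ) * (∑ i, x i * A.mulVec (w s) i) = ∑ i, x i * c t i := by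
    intro t x
    simp only [hc, Finset.mul_sum]
    rw [Finset.sum_comm]
    apply Finset.sum_congr rfl
    intro i _
    apply Finset.sum_congr rfl
    intro s _
    ring
  -- R (p 0) = 0
  have hR0 : R (p 0) = 0 := by
    simp only [hR, hp0]
    have : (n:ℝ) * (n:ℝ)⁻¹ = 1 := mul_inv_cancel₀ hn.ne'
    simp [this]
  -- minimizer property for all t ≤ T
  have hminG : ∀ t, t ≤ T → IsMinOn (fun x : Fin n → ℝ =>
      (∑ i, x i * c t i) + 4 * R x) (stdSimplex ℝ (Fin n)) (p t) := by
    intro t ht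
    rcases Nat.eq_zero_or_pos t with rfl | htpos
    · rw [isMinOn_iff]
      intro x hx
      have hc0 : ∀ i, c 0 i = 0 := by
        intro i; simp [hc]
      simp only [hc0, mul_zero, Finset.sum_const_zero, zero_add]
      rw [hR0]
      have := sp_R_nonneg x hx
      simp only [hR] at this ⊢
      linarith
    · have hmem : t ∈ Finset.Icc 1 T := Finset.mem_Icc.mpr ⟨htpos, ht⟩
      have h := hp t hmem
      rw [isMinOn_iff] at h ⊢
      intro x hx
      have h1 := h x hx
      rw [hswap t x, hswap t (p t)] at h1
      simp only [hR]
      linarith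
  -- the be-the-leader induction
  have claim : ∀ t, t ≤ T →
      (∑ s ∈ Finset.Icc 1 t, (s:ℝ) * (∑ i, p s i * A.mulVec (w s) i))
        + 2 * ∑ s ∈ Finset.Icc 1 t, (∑ i, |p s i - p (s-1) i|)^2
      ≤ (∑ i, p t i * c t i) + 4 * R (p t) := by
    intro t
    induction t with
    | zero =>
      intro _
      have hc0 : ∀ i, c 0 i = 0 := by intro i; simp [hc]
      simp [hc0, hR0]
    | succ t ih =>
      intro ht
      have ht' : t ≤ T := Nat.le_of_succ_le ht
      have ihh := ih ht'
      rw [Finset.sum_Icc_succ_top (Nat.one_le_iff_ne_zero.mpr (Nat.succ_ne_zero t)),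
          Finset.sum_Icc_succ_top (Nat.one_le_iff_ne_zero.mpr (Nat.succ_ne_zero t))]
      have hkey := sp_min_bound (c t) (p t) (by
          have := hminG t ht'
          simpa only [hR] using this) (hpmem t) (p (t+1)) (hpmem (t+1))
      have hcsucc : ∀ x : Fin n → ℝ, ∑ i, x i * c (t+1) i
          = (∑ i, x i * c t i) + ((t:ℝ)+1) * (∑ i, x i * A.mulVec (w (t+1)) i) := by
        intro x
        rw [← hswap (t+1) x, ← hswap t x,
            Finset.sum_Icc_succ_top (Nat.one_le_iff_ne_zero.mpr (Nat.succ_ne_zero t))]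
        push_cast
        ring
      rw [hcsucc (p (t+1))]
      have hab : ∑ i, |p (t+1) i - p (t+1-1) i| = ∑ i, |p (t+1) i - p t i| := by
        simp
      rw [hab]
      simp only [hR] at hkey ihh ⊢
      push_cast
      nlinarith [hkey, ihh]
  -- conclude
  have hfin := claim T le_rfl
  have hminT := (hminG T le_rfl) hq
  simp only [Set.mem_setOf_eq] at hminT
  have hq4 : ∑ i, q i * c T i = ∑ t ∈ Finset.Icc 1 T, (t:ℝ) * (∑ i, q i * A.mulVec (w t) i) :=
    (hswap T q).symm
  have hRq := sp_R_le_log q hq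
  have hsq : 0 ≤ ∑ t ∈ Finset.Icc 1 T, (∑ i, |p t i - p (t-1) i|)^2 :=
    Finset.sum_nonneg fun t _ => sq_nonneg _
  simp only [hR] at hfin hminT hRq
  rw [hq4] at hminT
  linarith
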